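/- Quasi-Lipschitz kernel estimate: there is a constant C such that for all x, x' ∈ ℝ² with r = |x - x'| < 1, ∫_{ℝ²} | (x-y)^⊥/|x-y|² - (x'-y)^⊥/|x'-y|² | σ^c(y) dy ≤ C r (1 - ln r), where σ^c(y) = (1/2π)e^{-c|y|²/2} and z^⊥ = (-z_2, z_1). -/

import Mathlib

open MeasureTheory Real

/-- The perpendicular `z^⊥ = (-z₂, z₁)` in `ℝ²`. -/
noncomputable def perpE (z : EuclideanSpace ℝ (Fin 2)) : EuclideanSpace ℝ (Fin 2) :=
  (WithLp.equiv 2 (Fin 2 → ℝ)).symm ![-z 1, z 0]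

/-- The Biot–Savart-type kernel `K(z) = z^⊥/|z|²`. -/
noncomputable def BSkernel (z : EuclideanSpace ℝ (Fin 2)) : EuclideanSpace ℝ (Fin 2) :=
  (1 / ‖z‖ ^ 2) • perpE z

open Metric Set Measure intervalIntegral
open scoped ENNReal

namespace QLKE

abbrev E2 := EuclideanSpace ℝ (Fin 2)

lemma inner_perpE (z w : E2) : inner ℝ (perpE z) (perpE w) = inner ℝ z w := by
  simp [PiLp.inner_apply, Fin.sum_univ_two,
    show ∀ u : E2, perpE u 0 = -u 1 from fun _ => rfl,
    show ∀ u : E2, perpE u 1 = u 0 from fun _ => rfl]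
  ring

lemma norm_perpE (z : E2) : ‖perpE z‖ = ‖z‖ := by
  have h := inner_perpE z z
  rw [real_inner_self_eq_norm_sq, real_inner_self_eq_norm_sq] at h
  nlinarith [norm_nonneg (perpE z), norm_nonneg z]

lemma norm_BSkernel (z : E2) : ‖BSkernel z‖ = ‖z‖⁻¹ := by
  rcases eq_or_ne z 0 with rfl | hz
  · simp [BSkernel]
  · rw [BSkernel, norm_smul, norm_perpE, norm_div, norm_one, Real.norm_eq_abs,
      abs_of_nonneg (sq_nonneg ‖z‖)]
    have : ‖z‖ ≠ 0 := norm_ne_zero_iff.2 hz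
    field_simp

lemma norm_BSkernel_sub (z w : E2) (hz : z ≠ 0) (hw : w ≠ 0) :
    ‖BSkernel z - BSkernel w‖ = ‖z - w‖ / (‖z‖ * ‖w‖) := by
  have hz' : ‖z‖ ≠ 0 := norm_ne_zero_iff.2 hz
  have hw' : ‖w‖ ≠ 0 := norm_ne_zero_iff.2 hw
  have hsq : ‖BSkernel z - BSkernel w‖ ^ 2 = (‖z - w‖ / (‖z‖ * ‖w‖)) ^ 2 := by
    rw [norm_sub_sq_real, div_pow, norm_sub_sq_real]
    have h1 : inner ℝ (BSkernel z) (BSkernel w)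
        = (1 / ‖z‖ ^ 2) * ((1 / ‖w‖ ^ 2) * inner ℝ z w) := by
      rw [BSkernel, BSkernel, real_inner_smul_left, real_inner_smul_right, inner_perpE]
    rw [h1, norm_BSkernel, norm_BSkernel]
    field_simp
    ring
  have h0 : 0 ≤ ‖z - w‖ / (‖z‖ * ‖w‖) := by positivity
  nlinarith [norm_nonneg (BSkernel z - BSkernel w)]

lemma continuous_perpE : Continuous perpE := by
  have h0 : Continuous fun z : E2 => z 0 :=
    (continuous_apply (0 : Fin 2)).comp (PiLp.continuous_ofLp 2 (fun _ : Fin 2 => ℝ))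
  have h1 : Continuous fun z : E2 => z 1 :=
    (continuous_apply (1 : Fin 2)).comp (PiLp.continuous_ofLp 2 (fun _ : Fin 2 => ℝ))
  unfold perpE
  refine (PiLp.continuous_toLp 2 (fun _ : Fin 2 => ℝ)).comp (continuous_pi ?_)
  intro i
  fin_cases i
  · exact h1.neg
  · simpa using h0

lemma measurable_BSkernel : Measurable BSkernel := by
  unfold BSkernel
  apply Measurable.fun_smul
  · fun_prop
  · exact continuous_perpE.measurable

lemma lintegral_norm_radial (f : ℝ → ℝ≥0∞) (hf : Measurable f) :
    ∫⁻ y : E2, f ‖y‖ = (2 * volume (ball (0:E2) 1)) *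
      ∫⁻ s in Set.Ioi (0:ℝ), ENNReal.ofReal s * f s := by
  have hdim : Module.finrank ℝ E2 = 2 := by simp
  have h1 : ∫⁻ y : E2, f ‖y‖ = ∫⁻ y in ({0}ᶜ : Set E2), f ‖y‖ := by
    rw [restrict_compl_singleton]
  have h2 : ∫⁻ y in ({0}ᶜ : Set E2), f ‖y‖
      = ∫⁻ y : ({0}ᶜ : Set E2), f ‖(y : E2)‖ ∂(volume.comap Subtype.val) :=
    (lintegral_subtype_comap (measurableSet_singleton _).compl _).symm
  have hmeas : Measurable (fun p : sphere (0:E2) 1 × Set.Ioi (0:ℝ) => f p.2) :=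
    hf.comp (measurable_subtype_coe.comp measurable_snd)
  have h3 := (volume.measurePreserving_homeomorphUnitSphereProd (E:=E2)).lintegral_comp hmeas
  have hrfl : (fun y : ({0}ᶜ : Set E2) => f ‖(y : E2)‖)
      = fun y : ({0}ᶜ : Set E2) => f (((homeomorphUnitSphereProd E2) y).2 : ℝ) := by
    funext y; rw [homeomorphUnitSphereProd_apply_snd_coe]
  have h4 : ∫⁻ p : sphere (0:E2) 1 × Set.Ioi (0:ℝ), f p.2
          ∂(volume.toSphere.prod (volumeIoiPow (Module.finrank ℝ E2 - 1)))
      = volume.toSphere (univ : Set (sphere (0:E2) 1)) *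
        ∫⁻ t : Set.Ioi (0:ℝ), f t ∂(volumeIoiPow (Module.finrank ℝ E2 - 1)) := by
    rw [lintegral_prod _ hmeas.aemeasurable]
    simp [lintegral_const, mul_comm]
  have hdens : Measurable (fun r : Set.Ioi (0:ℝ) =>
      ENNReal.ofReal ((r:ℝ) ^ (Module.finrank ℝ E2 - 1))) := by measurability
  have hfc : Measurable (fun t : Set.Ioi (0:ℝ) => f t) := hf.comp measurable_subtype_coe
  have h5 : ∫⁻ t : Set.Ioi (0:ℝ), f t ∂(volumeIoiPow (Module.finrank ℝ E2 - 1))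
      = ∫⁻ s in Set.Ioi (0:ℝ), ENNReal.ofReal s * f s := by
    rw [Measure.volumeIoiPow, lintegral_withDensity_eq_lintegral_mul _ hdens hfc]
    simp only [Pi.mul_apply]
    rw [lintegral_subtype_comap measurableSet_Ioi
      (fun s : ℝ => ENNReal.ofReal (s ^ (Module.finrank ℝ E2 - 1)) * f s), hdim]
    simp
  rw [h1, h2, hrfl, h3, h4, h5, Measure.toSphere_apply_univ, hdim]
  norm_num

lemma lintegral_norm_shift (g : ℝ → ℝ≥0∞) (x : E2) :
    ∫⁻ y : E2, g ‖x - y‖ = ∫⁻ y : E2, g ‖y‖ := by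
  have he : (fun y : E2 => g ‖x - y‖) = fun y => g ‖y - x‖ := by
    funext y; rw [norm_sub_rev]
  rw [he]
  exact lintegral_sub_right_eq_self (fun y => g ‖y‖) x

noncomputable def Mgauss (c : ℝ) : ℝ := ∫ s in Set.Ioi (0:ℝ), s * Real.exp (-c * s^2 / 2)

lemma Mgauss_nonneg (c : ℝ) : 0 ≤ Mgauss c := by
  apply setIntegral_nonneg measurableSet_Ioi
  intro s hs
  have hs' : (0:ℝ) ≤ s := le_of_lt hs
  positivity

lemma integrableOn_gauss1d {c : ℝ} (hc : 0 < c) :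
    IntegrableOn (fun s : ℝ => s * Real.exp (-c * s^2 / 2)) (Set.Ioi 0) := by
  have h := integrableOn_rpow_mul_exp_neg_mul_sq (b := c/2) (by linarith) (s := 1) (by norm_num)
  have he : (fun x : ℝ => x ^ (1:ℝ) * Real.exp (-(c/2) * x ^ 2))
      = fun x : ℝ => x * Real.exp (-c * x^2 / 2) := by
    funext x; rw [Real.rpow_one]; ring_nf
  rwa [he] at h

lemma seg_gauss {c : ℝ} (hc : 0 < c) :
    ∫⁻ s in Set.Ioi (0:ℝ), ENNReal.ofReal s * ENNReal.ofReal (Real.exp (-c * s^2 / 2))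
      = ENNReal.ofReal (Mgauss c) := by
  rw [Mgauss, ofReal_integral_eq_lintegral_ofReal (integrableOn_gauss1d hc) ?_]
  · apply setLIntegral_congr_fun measurableSet_Ioi
    intro s hs
    dsimp only
    rw [ENNReal.ofReal_mul (le_of_lt hs)]
  · filter_upwards [ae_restrict_mem measurableSet_Ioi] with s hs
    have hs' : (0:ℝ) ≤ s := le_of_lt hs
    positivity

lemma seg1 (R : ℝ) (hR : 0 ≤ R) :
    ∫⁻ s in Set.Ioi (0:ℝ),
      ENNReal.ofReal s * (Set.Iic R).indicator (fun u => ENNReal.ofReal u⁻¹) s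
      = ENNReal.ofReal R := by
  have hcong : ∀ s ∈ Set.Ioi (0:ℝ),
      ENNReal.ofReal s * (Set.Iic R).indicator (fun u => ENNReal.ofReal u⁻¹) s
        = (Set.Ioc (0:ℝ) R).indicator (fun _ => (1:ℝ≥0∞)) s := by
    intro s hs
    rw [Set.mem_Ioi] at hs
    by_cases h : s ≤ R
    · rw [Set.indicator_of_mem (Set.mem_Iic.2 h), Set.indicator_of_mem (Set.mem_Ioc.2 ⟨hs, h⟩),
        ← ENNReal.ofReal_mul hs.le, mul_inv_cancel₀ hs.ne', ENNReal.ofReal_one]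
    · rw [Set.indicator_of_notMem (by simpa using h),
        Set.indicator_of_notMem (fun hmem => h (Set.mem_Ioc.1 hmem).2), mul_zero]
  rw [setLIntegral_congr_fun measurableSet_Ioi hcong]
  rw [lintegral_indicator measurableSet_Ioc, Measure.restrict_restrict measurableSet_Ioc]
  simp [Set.Ioc_inter_Ioi, Real.volume_Ioc, hR]

lemma seg3 {r : ℝ} (hr : 0 < r) (hr1 : r < 1) :
    ∫⁻ s in Set.Ioi (0:ℝ),
      ENNReal.ofReal s * (Set.Ioc r 1).indicator (fun u => ENNReal.ofReal ((u^2)⁻¹)) s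
      = ENNReal.ofReal (-Real.log r) := by
  have hcong : ∀ s ∈ Set.Ioi (0:ℝ),
      ENNReal.ofReal s * (Set.Ioc r 1).indicator (fun u => ENNReal.ofReal ((u^2)⁻¹)) s
        = (Set.Ioc r 1).indicator (fun u => ENNReal.ofReal u⁻¹) s := by
    intro s hs
    rw [Set.mem_Ioi] at hs
    by_cases h : s ∈ Set.Ioc r 1
    · rw [Set.indicator_of_mem h, Set.indicator_of_mem h, ← ENNReal.ofReal_mul hs.le]
      congr 1
      field_simp
    · rw [Set.indicator_of_notMem h, Set.indicator_of_notMem h, mul_zero]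
  rw [setLIntegral_congr_fun measurableSet_Ioi hcong]
  have hsub : Set.Ioc r 1 ⊆ Set.Ioi 0 := fun s hs => lt_trans hr hs.1
  rw [lintegral_indicator measurableSet_Ioc, Measure.restrict_restrict measurableSet_Ioc,
    Set.inter_eq_self_of_subset_left hsub]
  have hint : IntegrableOn (fun s : ℝ => s⁻¹) (Set.Ioc r 1) := by
    apply (ContinuousOn.integrableOn_compact isCompact_Icc ?_).mono_set Set.Ioc_subset_Icc_self
    exact ContinuousOn.inv₀ continuousOn_id (fun s hs => ne_of_gt (lt_of_lt_of_le hr hs.1))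
  rw [← ofReal_integral_eq_lintegral_ofReal hint ?_]
  · congr 1
    rw [← intervalIntegral.integral_of_le hr1.le]
    have h0 : (0:ℝ) ∉ Set.uIcc r 1 := by
      rw [Set.uIcc_of_le hr1.le]; intro h; exact absurd h.1 (not_le.2 hr)
    rw [integral_inv h0, one_div, Real.log_inv]
  · filter_upwards [ae_restrict_mem measurableSet_Ioc] with s hs
    exact inv_nonneg.2 (le_of_lt (lt_trans hr hs.1))

set_option maxHeartbeats 1000000 in
lemma pointwise_bound {c : ℝ} (hc : 0 < c) (x x' y : E2)
    (hr : 0 < ‖x - x'‖) (hr1 : ‖x - x'‖ < 1) :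
    ENNReal.ofReal (‖BSkernel (x - y) - BSkernel (x' - y)‖ *
        ((1 / (2 * π)) * Real.exp (-c * ‖y‖ ^ 2 / 2)))
      ≤ ENNReal.ofReal (1/(2*π)) *
          ((Set.Iic (2*‖x - x'‖)).indicator (fun u => ENNReal.ofReal u⁻¹) ‖x - y‖
           + (Set.Iic (3*‖x - x'‖)).indicator (fun u => ENNReal.ofReal u⁻¹) ‖x' - y‖
           + ENNReal.ofReal (2*‖x - x'‖) *
             (Set.Ioc ‖x - x'‖ 1).indicator (fun u => ENNReal.ofReal ((u^2)⁻¹)) ‖x - y‖)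
        + ENNReal.ofReal (2*‖x - x'‖) * ENNReal.ofReal (Real.exp (-c * ‖y‖ ^ 2 / 2)) := by
  set r := ‖x - x'‖ with hrdef
  set z := x - y with hzdef
  set w := x' - y with hwdef
  have hzw : z - w = x - x' := by rw [hzdef, hwdef]; abel
  have hnzw : ‖z - w‖ = r := by rw [hzw]
  have hexp_pos : 0 < Real.exp (-c * ‖y‖ ^ 2 / 2) := Real.exp_pos _
  have hexp_le : Real.exp (-c * ‖y‖ ^ 2 / 2) ≤ 1 := by
    apply Real.exp_le_one_iff.2
    have : 0 ≤ c * ‖y‖ ^ 2 := by positivity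
    nlinarith
  have hπ : 0 < 2 * π := by positivity
  have hπle : 1 / (2*π) ≤ 1 := by
    rw [div_le_one hπ]
    nlinarith [Real.pi_gt_three]
  by_cases hcase : ‖z‖ ≤ 2*r
  · -- near region
    have hw3 : ‖w‖ ≤ 3*r := by
      have hwz : w = z - (x - x') := by rw [hzdef, hwdef]; abel
      calc ‖w‖ = ‖z - (x - x')‖ := by rw [hwz]
        _ ≤ ‖z‖ + ‖x - x'‖ := norm_sub_le _ _
        _ ≤ 2*r + r := add_le_add hcase le_rfl
        _ = 3*r := by ring
    have hstep : ‖BSkernel z - BSkernel w‖ * ((1/(2*π)) * Real.exp (-c * ‖y‖ ^ 2 / 2))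
        ≤ (1/(2*π)) * (‖z‖⁻¹ + ‖w‖⁻¹) := by
      have h1 : ‖BSkernel z - BSkernel w‖ ≤ ‖z‖⁻¹ + ‖w‖⁻¹ := by
        calc ‖BSkernel z - BSkernel w‖ ≤ ‖BSkernel z‖ + ‖BSkernel w‖ := norm_sub_le _ _
          _ = ‖z‖⁻¹ + ‖w‖⁻¹ := by rw [norm_BSkernel, norm_BSkernel]
      have h2 : (1/(2*π)) * Real.exp (-c * ‖y‖ ^ 2 / 2) ≤ 1/(2*π) :=
        mul_le_of_le_one_right (by positivity) hexp_le
      calc ‖BSkernel z - BSkernel w‖ * ((1/(2*π)) * Real.exp (-c * ‖y‖ ^ 2 / 2))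
          ≤ (‖z‖⁻¹ + ‖w‖⁻¹) * (1/(2*π)) := by
            apply mul_le_mul h1 h2 (by positivity) (by positivity)
        _ = (1/(2*π)) * (‖z‖⁻¹ + ‖w‖⁻¹) := by ring
    refine le_trans (ENNReal.ofReal_le_ofReal hstep) ?_
    rw [ENNReal.ofReal_mul (by positivity), ENNReal.ofReal_add (by positivity) (by positivity)]
    have hi1 : (Set.Iic (2*r)).indicator (fun u => ENNReal.ofReal u⁻¹) ‖z‖
        = ENNReal.ofReal ‖z‖⁻¹ := Set.indicator_of_mem (Set.mem_Iic.2 hcase) _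
    have hi2 : (Set.Iic (3*r)).indicator (fun u => ENNReal.ofReal u⁻¹) ‖w‖
        = ENNReal.ofReal ‖w‖⁻¹ := Set.indicator_of_mem (Set.mem_Iic.2 hw3) _
    calc ENNReal.ofReal (1/(2*π)) * (ENNReal.ofReal ‖z‖⁻¹ + ENNReal.ofReal ‖w‖⁻¹)
        ≤ ENNReal.ofReal (1/(2*π)) *
            ((Set.Iic (2*r)).indicator (fun u => ENNReal.ofReal u⁻¹) ‖z‖
             + (Set.Iic (3*r)).indicator (fun u => ENNReal.ofReal u⁻¹) ‖w‖
             + ENNReal.ofReal (2*r) *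
               (Set.Ioc r 1).indicator (fun u => ENNReal.ofReal ((u^2)⁻¹)) ‖z‖) := by
          rw [hi1, hi2]
          exact mul_le_mul_right le_self_add _
      _ ≤ _ := le_self_add
  · -- far region
    push_neg at hcase
    have hz0 : 0 < ‖z‖ := lt_trans (by positivity) hcase
    have hzne : z ≠ 0 := norm_pos_iff.1 hz0
    have hwlow : ‖z‖ - r ≤ ‖w‖ := by
      have hzw2 : z = w + (z - w) := by abel
      have : ‖z‖ ≤ ‖w‖ + r := by
        calc ‖z‖ = ‖w + (z - w)‖ := by rw [← hzw2]
          _ ≤ ‖w‖ + ‖z - w‖ := norm_add_le _ _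
          _ = ‖w‖ + r := by rw [hnzw]
      linarith
    have hw2 : ‖z‖/2 ≤ ‖w‖ := by linarith
    have hw0 : 0 < ‖w‖ := lt_of_lt_of_le (by linarith) hw2
    have hwne : w ≠ 0 := norm_pos_iff.1 hw0
    have hid : ‖BSkernel z - BSkernel w‖ = r / (‖z‖ * ‖w‖) := by
      rw [norm_BSkernel_sub z w hzne hwne, hnzw]
    by_cases h1 : ‖z‖ ≤ 1
    · -- middle region
      have hkey : r / (‖z‖ * ‖w‖) ≤ 2*r * (‖z‖^2)⁻¹ := by
        have hd1 : ‖z‖ * (‖z‖/2) ≤ ‖z‖ * ‖w‖ := by nlinarith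
        calc r / (‖z‖ * ‖w‖) ≤ r / (‖z‖ * (‖z‖/2)) :=
            div_le_div_of_nonneg_left hr.le (by positivity) hd1
          _ = 2*r * (‖z‖^2)⁻¹ := by field_simp
      have hstep : ‖BSkernel z - BSkernel w‖ * ((1/(2*π)) * Real.exp (-c * ‖y‖ ^ 2 / 2))
          ≤ (1/(2*π)) * (2*r * (‖z‖^2)⁻¹) := by
        rw [hid]
        have h2 : (1/(2*π)) * Real.exp (-c * ‖y‖ ^ 2 / 2) ≤ 1/(2*π) :=
          mul_le_of_le_one_right (by positivity) hexp_le
        calc r / (‖z‖ * ‖w‖) * ((1/(2*π)) * Real.exp (-c * ‖y‖ ^ 2 / 2))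
            ≤ (2*r * (‖z‖^2)⁻¹) * (1/(2*π)) :=
              mul_le_mul hkey h2 (by positivity) (by positivity)
          _ = (1/(2*π)) * (2*r * (‖z‖^2)⁻¹) := by ring
      refine le_trans (ENNReal.ofReal_le_ofReal hstep) ?_
      rw [ENNReal.ofReal_mul (by positivity), ENNReal.ofReal_mul (by positivity)]
      have hi3 : (Set.Ioc r 1).indicator (fun u => ENNReal.ofReal ((u^2)⁻¹)) ‖z‖
          = ENNReal.ofReal ((‖z‖^2)⁻¹) := by
        apply Set.indicator_of_mem (Set.mem_Ioc.2 ⟨by linarith, h1⟩)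
      calc ENNReal.ofReal (1/(2*π)) * (ENNReal.ofReal (2*r) * ENNReal.ofReal ((‖z‖^2)⁻¹))
          ≤ ENNReal.ofReal (1/(2*π)) *
              ((Set.Iic (2*r)).indicator (fun u => ENNReal.ofReal u⁻¹) ‖z‖
               + (Set.Iic (3*r)).indicator (fun u => ENNReal.ofReal u⁻¹) ‖w‖
               + ENNReal.ofReal (2*r) *
                 (Set.Ioc r 1).indicator (fun u => ENNReal.ofReal ((u^2)⁻¹)) ‖z‖) := by
            rw [hi3]
            exact mul_le_mul_right le_add_self _
        _ ≤ _ := le_self_add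
    · -- outer region
      push_neg at h1
      have hkey : r / (‖z‖ * ‖w‖) ≤ 2*r := by
        rw [div_le_iff₀ (by positivity)]
        have hprod : ‖z‖ * (‖z‖/2) ≤ ‖z‖ * ‖w‖ := mul_le_mul_of_nonneg_left hw2 hz0.le
        have h2' : 1 < ‖z‖ * ‖z‖ := by nlinarith
        have h3' : r * 1 ≤ r * (‖z‖ * ‖z‖) := mul_le_mul_of_nonneg_left h2'.le hr.le
        have h4' : 2*r * (‖z‖ * (‖z‖/2)) ≤ 2*r * (‖z‖ * ‖w‖) :=
          mul_le_mul_of_nonneg_left hprod (by positivity)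
        nlinarith [h3', h4']
      have hstep : ‖BSkernel z - BSkernel w‖ * ((1/(2*π)) * Real.exp (-c * ‖y‖ ^ 2 / 2))
          ≤ 2*r * Real.exp (-c * ‖y‖ ^ 2 / 2) := by
        rw [hid]
        have h2 : (1/(2*π)) * Real.exp (-c * ‖y‖ ^ 2 / 2) ≤ Real.exp (-c * ‖y‖ ^ 2 / 2) := by
          nlinarith
        exact mul_le_mul hkey h2 (by positivity) (by positivity)
      refine le_trans (ENNReal.ofReal_le_ofReal hstep) ?_
      rw [ENNReal.ofReal_mul (by positivity)]
      exact le_add_self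

end QLKE

open QLKE in
/-- Quasi-Lipschitz kernel estimate: for `r = |x-x'| < 1`,
`∫ |K(x-y) - K(x'-y)| σ^c(y) dy ≤ C r (1 - ln r)`. -/
theorem quasi_lipschitz_kernel_estimate (c : ℝ) (hc : c ∈ Set.Ioo (0 : ℝ) 1) :
    ∃ C : ℝ, ∀ x x' : EuclideanSpace ℝ (Fin 2), ‖x - x'‖ < 1 →
      ∫ y : EuclideanSpace ℝ (Fin 2),
          ‖BSkernel (x - y) - BSkernel (x' - y)‖ *
            ((1 / (2 * π)) * Real.exp (-c * ‖y‖ ^ 2 / 2)) ≤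
        C * ‖x - x'‖ * (1 - Real.log ‖x - x'‖) := by
  obtain ⟨hc0, -⟩ := hc
  set κ : ℝ≥0∞ := 2 * volume (Metric.ball (0 : EuclideanSpace ℝ (Fin 2)) 1) with hκdef
  have hκtop : κ ≠ ⊤ := ENNReal.mul_ne_top (by simp) measure_ball_lt_top.ne
  set k : ℝ := κ.toReal with hkdef
  have hk0 : 0 ≤ k := ENNReal.toReal_nonneg
  have hκk : κ = ENNReal.ofReal k := (ENNReal.ofReal_toReal hκtop).symm
  have hM : 0 ≤ Mgauss c := Mgauss_nonneg c
  refine ⟨k * (7 + 2 * Mgauss c), ?_⟩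
  intro x x' hxx'
  by_cases hx0 : x = x'
  · subst hx0; simp
  have hr : 0 < ‖x - x'‖ := norm_pos_iff.2 (sub_ne_zero.2 hx0)
  set r := ‖x - x'‖ with hrdef
  have hlogr : 0 ≤ -Real.log r := neg_nonneg.2 (Real.log_nonpos hr.le hxx'.le)
  have hRHS0 : 0 ≤ k * (7 + 2 * Mgauss c) * r * (1 - Real.log r) :=
    mul_nonneg (mul_nonneg (mul_nonneg hk0 (by nlinarith)) hr.le) (by nlinarith)
  have hintmeas : Measurable (fun y : EuclideanSpace ℝ (Fin 2) =>
      ‖BSkernel (x - y) - BSkernel (x' - y)‖ * ((1 / (2 * π)) * Real.exp (-c * ‖y‖ ^ 2 / 2))) := by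
    apply Measurable.mul
    · exact ((measurable_BSkernel.comp (measurable_const.sub measurable_id)).sub
        (measurable_BSkernel.comp (measurable_const.sub measurable_id))).norm
    · apply Measurable.const_mul
      exact Real.measurable_exp.comp (by fun_prop)
  rw [integral_eq_lintegral_of_nonneg_ae (Filter.Eventually.of_forall fun y => by positivity)
    hintmeas.aestronglyMeasurable]
  -- measurability of pieces
  have mf1 : Measurable ((Set.Iic (2*r)).indicator (fun u : ℝ => ENNReal.ofReal u⁻¹)) :=
    measurable_inv.ennreal_ofReal.indicator measurableSet_Iic
  have mf2 : Measurable ((Set.Iic (3*r)).indicator (fun u : ℝ => ENNReal.ofReal u⁻¹)) :=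
    measurable_inv.ennreal_ofReal.indicator measurableSet_Iic
  have mf3 : Measurable ((Set.Ioc r 1).indicator (fun u : ℝ => ENNReal.ofReal ((u^2)⁻¹))) :=
    ((measurable_id.pow_const 2).inv.ennreal_ofReal).indicator measurableSet_Ioc
  have mfσ : Measurable (fun s : ℝ => ENNReal.ofReal (Real.exp (-c * s^2/2))) :=
    (Real.measurable_exp.comp (by fun_prop)).ennreal_ofReal
  have hnx : Measurable fun y : E2 => ‖x - y‖ := (measurable_const.sub measurable_id).norm
  have hnx' : Measurable fun y : E2 => ‖x' - y‖ := (measurable_const.sub measurable_id).norm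
  have mA1 : Measurable fun y : E2 =>
      (Set.Iic (2*r)).indicator (fun u : ℝ => ENNReal.ofReal u⁻¹) ‖x - y‖ := mf1.comp hnx
  have mA2 : Measurable fun y : E2 =>
      (Set.Iic (3*r)).indicator (fun u : ℝ => ENNReal.ofReal u⁻¹) ‖x' - y‖ := mf2.comp hnx'
  have mA3 : Measurable fun y : E2 =>
      (Set.Ioc r 1).indicator (fun u : ℝ => ENNReal.ofReal ((u^2)⁻¹)) ‖x - y‖ := mf3.comp hnx
  -- the lintegrals of the pieces
  have I1 : ∫⁻ y : E2, (Set.Iic (2*r)).indicator (fun u : ℝ => ENNReal.ofReal u⁻¹) ‖x - y‖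
      = κ * ENNReal.ofReal (2*r) := by
    rw [lintegral_norm_shift _ x, lintegral_norm_radial _ mf1, seg1 (2*r) (by positivity)]
  have I2 : ∫⁻ y : E2, (Set.Iic (3*r)).indicator (fun u : ℝ => ENNReal.ofReal u⁻¹) ‖x' - y‖
      = κ * ENNReal.ofReal (3*r) := by
    rw [lintegral_norm_shift _ x', lintegral_norm_radial _ mf2, seg1 (3*r) (by positivity)]
  have I3 : ∫⁻ y : E2, (Set.Ioc r 1).indicator (fun u : ℝ => ENNReal.ofReal ((u^2)⁻¹)) ‖x - y‖
      = κ * ENNReal.ofReal (-Real.log r) := by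
    rw [lintegral_norm_shift _ x, lintegral_norm_radial _ mf3, seg3 hr hxx']
  have Iσ : ∫⁻ y : E2, ENNReal.ofReal (Real.exp (-c * ‖y‖^2/2))
      = κ * ENNReal.ofReal (Mgauss c) := by
    rw [lintegral_norm_radial (fun s => ENNReal.ofReal (Real.exp (-c * s^2/2))) mfσ,
      seg_gauss hc0]
  suffices key : (∫⁻ y : E2, ENNReal.ofReal
      (‖BSkernel (x - y) - BSkernel (x' - y)‖ * ((1 / (2 * π)) * Real.exp (-c * ‖y‖ ^ 2 / 2))))
      ≤ ENNReal.ofReal (k * (7 + 2 * Mgauss c) * r * (1 - Real.log r)) by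
    have h2 := ENNReal.toReal_mono ENNReal.ofReal_ne_top key
    rwa [ENNReal.toReal_ofReal hRHS0] at h2
  calc (∫⁻ y : E2, ENNReal.ofReal
      (‖BSkernel (x - y) - BSkernel (x' - y)‖ * ((1 / (2 * π)) * Real.exp (-c * ‖y‖ ^ 2 / 2))))
      ≤ ∫⁻ y : E2, (ENNReal.ofReal (1/(2*π)) *
          ((Set.Iic (2*r)).indicator (fun u => ENNReal.ofReal u⁻¹) ‖x - y‖
           + (Set.Iic (3*r)).indicator (fun u => ENNReal.ofReal u⁻¹) ‖x' - y‖
           + ENNReal.ofReal (2*r) *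
             (Set.Ioc r 1).indicator (fun u => ENNReal.ofReal ((u^2)⁻¹)) ‖x - y‖)
        + ENNReal.ofReal (2*r) * ENNReal.ofReal (Real.exp (-c * ‖y‖ ^ 2 / 2))) :=
      lintegral_mono fun y => pointwise_bound hc0 x x' y hr hxx'
    _ = ENNReal.ofReal (1/(2*π)) * (κ * ENNReal.ofReal (2*r) + κ * ENNReal.ofReal (3*r)
          + ENNReal.ofReal (2*r) * (κ * ENNReal.ofReal (-Real.log r)))
        + ENNReal.ofReal (2*r) * (κ * ENNReal.ofReal (Mgauss c)) := by
      rw [lintegral_add_left (((mA1.fun_add mA2).fun_add (mA3.const_mul _)).const_mul _)]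
      rw [lintegral_const_mul _ ((mA1.fun_add mA2).fun_add (mA3.const_mul _))]
      have mAσ : Measurable fun y : E2 => ENNReal.ofReal (Real.exp (-c * ‖y‖^2/2)) :=
        mfσ.comp measurable_norm
      rw [lintegral_const_mul _ mAσ]
      rw [lintegral_add_left (mA1.fun_add mA2)]
      rw [lintegral_add_left mA1]
      rw [lintegral_const_mul _ mA3]
      rw [I1, I2, I3, Iσ]
    _ ≤ ENNReal.ofReal (k * (7 + 2 * Mgauss c) * r * (1 - Real.log r)) := by
      have h2r : (0:ℝ) ≤ 2*r := by positivity
      have hkL : (0:ℝ) ≤ k * -Real.log r := mul_nonneg hk0 hlogr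
      have hs1 : (0:ℝ) ≤ k * (2*r) := by positivity
      have hs2 : (0:ℝ) ≤ k * (3*r) := by positivity
      have hs3 : (0:ℝ) ≤ 2*r * (k * -Real.log r) := mul_nonneg h2r hkL
      have hs12 : (0:ℝ) ≤ k * (2*r) + k * (3*r) := by positivity
      have hs123 : (0:ℝ) ≤ k * (2*r) + k * (3*r) + 2*r * (k * -Real.log r) := by linarith
      have hπ0' : (0:ℝ) ≤ 1/(2*π) := by positivity
      have hsM : (0:ℝ) ≤ 2*r * (k * Mgauss c) := by positivity
      rw [hκk, ← ENNReal.ofReal_mul hk0, ← ENNReal.ofReal_mul hk0, ← ENNReal.ofReal_mul hk0,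
        ← ENNReal.ofReal_mul hk0,
        ← ENNReal.ofReal_mul h2r, ← ENNReal.ofReal_mul h2r,
        ← ENNReal.ofReal_add hs1 hs2,
        ← ENNReal.ofReal_add hs12 hs3,
        ← ENNReal.ofReal_mul hπ0',
        ← ENNReal.ofReal_add (mul_nonneg hπ0' hs123) hsM]
      apply ENNReal.ofReal_le_ofReal
      have hπ0 : (0:ℝ) < 1/(2*π) := by positivity
      have hπle : 1/(2*π) ≤ 1 := by
        rw [div_le_one (by positivity)]
        nlinarith [Real.pi_gt_three]
      set L := -Real.log r with hL
      have hLr : Real.log r = -L := by rw [hL]; ring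
      rw [hLr]
      have hS0 : 0 ≤ k * (2*r) + k * (3*r) + 2*r * (k * L) := by
        nlinarith [mul_nonneg hk0 hr.le, mul_nonneg (mul_nonneg hk0 hr.le) hlogr]
      have hstep1 : 1/(2*π) * (k * (2*r) + k * (3*r) + 2*r * (k * L))
          ≤ k * (2*r) + k * (3*r) + 2*r * (k * L) :=
        mul_le_of_le_one_left hS0 hπle
      have hkrL : 0 ≤ k * r * L := mul_nonneg (mul_nonneg hk0 hr.le) hlogr
      have hkr : 0 ≤ k * r := mul_nonneg hk0 hr.le
      have hkrM : 0 ≤ k * r * Mgauss c := mul_nonneg hkr hM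
      have hkrLM : 0 ≤ k * r * L * Mgauss c := mul_nonneg hkrL hM
      nlinarith [hstep1, hkrL, hkr, hkrM, hkrLM]
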